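/- Let f ∈ C[0,1]. If a_0(n), a_1(n) are bounded convergent sequences satisfying 2a_0(n) + a_1(n) = 1 and, for all n, either a_0(n) < 0 or a_1(n) + a_0(n) < 0 (so that D_n^{M,1} is not a positive operator), then D_n^{M,1}(f; x) converges to f(x) uniformly on [0,1] as n → ∞. -/

import Mathlib

open Filter Topology

/-- Bernstein basis polynomial `p_{n,k}(x)`, zero when `k < 0` or `k > n`. -/
noncomputable def bern (n : ℕ) (k : ℤ) (x : ℝ) : ℝ :=
  if 0 ≤ k ∧ k ≤ (n : ℤ) then (n.choose k.toNat : ℝ) * x ^ k.toNat * (1 - x) ^ (n - k.toNat)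
  else 0

/-- Modified Bernstein basis `p_{n,k}^{M,1}(x)` of Khosravian-Arab et al. -/
noncomputable def pM1 (a0 a1 : ℕ → ℝ) (n : ℕ) (k : ℤ) (x : ℝ) : ℝ :=
  (a1 n * x + a0 n) * bern (n - 1) k x + (a1 n * (1 - x) + a0 n) * bern (n - 1) (k - 1) x

/-- First-order modified Durrmeyer operator `D_n^{M,1}(f;x)`. -/
noncomputable def DM1 (a0 a1 : ℕ → ℝ) (n : ℕ) (f : ℝ → ℝ) (x : ℝ) : ℝ :=
  ((n : ℝ) + 1) * ∑ k ∈ Finset.range (n + 1),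
    pM1 a0 a1 n k x * ∫ t in (0:ℝ)..1, bern n k t * f t

/-!
Pascal's rule `p_{n,k} = (1 - x) p_{n-1,k} + x p_{n-1,k-1}` and `2 a₀ + a₁ = 1` write
`D_n^{M,1} f` as the classical Durrmeyer operator `D_n f` plus
`c_n(x) ∑_k p_{n-1,k}(x) (μ_k - μ_{k+1})`, where `c_n(x) = (a₁(n) + 1) x + a₀(n) - 1` is bounded
and `μ_k` is the mean of `f` under the Beta density `(n + 1) p_{n,k}`. A continuous `f` on `[0,1]`
satisfies `|f t - f c| ≤ ε + K (t - c) ^ 2`, so `|D_n f - f|` and every `|μ_k - μ_{k+1}|` are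
at most `ε` plus `K` times second moments of Beta distributions, which are `O(1/n)`.
-/

open Polynomial intervalIntegral

lemma bern_natCast (n k : ℕ) (x : ℝ) :
    bern n k x = n.choose k * x ^ k * (1 - x) ^ (n - k) := by
  rcases le_or_gt k n with hk | hk
  · simp [bern, hk]
  · simp [bern, Nat.choose_eq_zero_of_lt hk, hk.not_ge]

lemma bern_eq_eval (n k : ℕ) (x : ℝ) : bern n k x = (bernsteinPolynomial ℝ n k).eval x := by
  simp [bern_natCast, bernsteinPolynomial]

lemma bern_of_neg (n : ℕ) {k : ℤ} (hk : k < 0) (x : ℝ) : bern n k x = 0 :=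
  if_neg fun h => by omega

lemma bern_nonneg (n : ℕ) (k : ℤ) {x : ℝ} (hx : x ∈ Set.Icc (0 : ℝ) 1) : 0 ≤ bern n k x := by
  unfold bern
  split_ifs
  · exact mul_nonneg (mul_nonneg (Nat.cast_nonneg _) (pow_nonneg hx.1 _))
      (pow_nonneg (sub_nonneg.2 hx.2) _)
  · rfl

@[fun_prop]
lemma continuous_bern (n : ℕ) (k : ℤ) : Continuous (bern n k) := by
  unfold bern
  split_ifs <;> fun_prop

lemma sum_bern (n : ℕ) (x : ℝ) : ∑ k ∈ Finset.range (n + 1), bern n k x = 1 := by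
  simpa [bern_eq_eval, eval_finsetSum] using congrArg (eval x) (bernsteinPolynomial.sum ℝ n)

lemma sum_mul_bern (n : ℕ) (x : ℝ) :
    ∑ k ∈ Finset.range (n + 1), (k : ℝ) * bern n k x = n * x := by
  simpa [bern_eq_eval, eval_finsetSum] using congrArg (eval x) (bernsteinPolynomial.sum_smul ℝ n)

lemma sum_sub_sq_mul_bern (n : ℕ) (x : ℝ) :
    ∑ k ∈ Finset.range (n + 1), (n * x - k) ^ 2 * bern n k x = n * x * (1 - x) := by
  simpa [bern_eq_eval, eval_finsetSum] using congrArg (eval x) (bernsteinPolynomial.variance ℝ n)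

lemma bern_succ (n k : ℕ) (x : ℝ) :
    bern (n + 1) k x = (1 - x) * bern n k x + x * bern n ((k : ℤ) - 1) x := by
  rcases k with _ | j
  · rw [bern_natCast, bern_natCast, bern_of_neg n (by norm_num)]
    simp only [Nat.choose_zero_right, Nat.sub_zero, pow_succ]
    ring
  · rw [show ((j + 1 : ℕ) : ℤ) - 1 = j by push_cast; ring, bern_natCast, bern_natCast,
      bern_natCast, Nat.choose_succ_succ', Nat.cast_add, Nat.add_sub_add_right]
    rcases lt_or_ge j n with hj | hj
    · rw [show n - j = n - (j + 1) + 1 by omega]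
      ring
    · rw [Nat.choose_eq_zero_of_lt (by omega : n < j + 1)]
      ring

lemma add_one_mul_mul_bern (n k : ℕ) (x : ℝ) :
    ((n : ℝ) + 1) * (x * bern n k x) = ((k : ℝ) + 1) * bern (n + 1) (k + 1 : ℕ) x := by
  have h := congrArg (Nat.cast : ℕ → ℝ) (Nat.add_one_mul_choose_eq n k)
  push_cast at h
  rw [bern_natCast, bern_natCast, Nat.add_sub_add_right]
  linear_combination x ^ (k + 1) * (1 - x) ^ (n - k) * h

lemma intervalIntegrable_bern_mul {f : ℝ → ℝ} (hf : ContinuousOn f (Set.Icc 0 1)) (n : ℕ)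
    (k : ℤ) : IntervalIntegrable (fun t => bern n k t * f t) MeasureTheory.volume 0 1 :=
  ((continuous_bern n k).continuousOn.mul (Set.uIcc_of_le (zero_le_one' ℝ) ▸ hf)).intervalIntegrable

lemma integral_bern_zero (n : ℕ) : ∫ t in (0 : ℝ)..1, bern n 0 t = 1 / ((n : ℝ) + 1) := by
  have hb (t : ℝ) : bern n 0 t = (1 - t) ^ n := by simpa using bern_natCast n 0 t
  simp only [hb, integral_comp_sub_left (fun t : ℝ => t ^ n), sub_self, sub_zero, integral_pow]
  norm_num

lemma integral_bern_succ {n k : ℕ} (hk : k < n) :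
    ∫ t in (0 : ℝ)..1, bern n (k + 1 : ℕ) t = ∫ t in (0 : ℝ)..1, bern n k t := by
  -- `p_{n+1,k+1}` vanishes at `0` and `1`, and its derivative is `(n + 1) (p_{n,k} - p_{n,k+1})`.
  set p := bernsteinPolynomial ℝ (n + 1) (k + 1)
  have hp : ∫ t in (0 : ℝ)..1, p.derivative.eval t = p.eval 1 - p.eval 0 :=
    integral_eq_sub_of_hasDerivAt (fun t _ => p.hasDerivAt t)
      (p.derivative.continuous.intervalIntegrable _ _)
  have hp0 : p.eval 1 - p.eval 0 = 0 := by
    simp [p, bernsteinPolynomial.eval_at_0, bernsteinPolynomial.eval_at_1, hk.ne]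
  rw [hp0] at hp
  simp only [p, bernsteinPolynomial.derivative_succ, Nat.add_sub_cancel, eval_mul, eval_sub,
    eval_natCast, ← bern_eq_eval] at hp
  rw [integral_const_mul, integral_sub ((continuous_bern _ _).intervalIntegrable _ _)
    ((continuous_bern _ _).intervalIntegrable _ _)] at hp
  have : ((n + 1 : ℕ) : ℝ) ≠ 0 := by positivity
  linarith [(mul_eq_zero.1 hp).resolve_left this]

lemma integral_bern {n k : ℕ} (hk : k ≤ n) :
    ∫ t in (0 : ℝ)..1, bern n k t = 1 / ((n : ℝ) + 1) := by
  induction k with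
  | zero => exact integral_bern_zero n
  | succ k ih => rw [integral_bern_succ hk, ih (by omega)]

/-- `(n + 1) * bern n k` is the density of the Beta distribution with parameters `k + 1` and
`n - k + 1`, so `betaMean n k f` is the mean of `f` under it. -/
noncomputable def betaMean (n : ℕ) (k : ℤ) (f : ℝ → ℝ) : ℝ :=
  ((n : ℝ) + 1) * ∫ t in (0 : ℝ)..1, bern n k t * f t

lemma integral_bern_mul_id {n k : ℕ} (hk : k ≤ n) :
    ∫ t in (0 : ℝ)..1, bern n k t * t = ((k : ℝ) + 1) / (((n : ℝ) + 1) * ((n : ℝ) + 2)) := by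
  have h (t : ℝ) : bern n k t * t = ((k : ℝ) + 1) / ((n : ℝ) + 1) * bern (n + 1) (k + 1 : ℕ) t := by
    rw [div_mul_eq_mul_div, ← add_one_mul_mul_bern]
    field_simp
  simp only [h, integral_const_mul, integral_bern (Nat.succ_le_succ hk)]
  push_cast
  field_simp
  ring

lemma integral_bern_mul_sq {n k : ℕ} (hk : k ≤ n) :
    ∫ t in (0 : ℝ)..1, bern n k t * t ^ 2
      = ((k : ℝ) + 1) * ((k : ℝ) + 2) / (((n : ℝ) + 1) * ((n : ℝ) + 2) * ((n : ℝ) + 3)) := by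
  have h (t : ℝ) : bern n k t * t ^ 2
      = ((k : ℝ) + 1) / ((n : ℝ) + 1) * bern (n + 1) (k + 1 : ℕ) t * t := by
    rw [div_mul_eq_mul_div, ← add_one_mul_mul_bern]
    field_simp
  simp only [h, mul_assoc, integral_const_mul, integral_bern_mul_id (Nat.succ_le_succ hk)]
  push_cast
  field_simp
  ring

lemma betaMean_sub_sq {n k : ℕ} (hk : k ≤ n) (c : ℝ) :
    betaMean n k (fun t => (t - c) ^ 2)
      = ((k : ℝ) + 1) * ((n : ℝ) + 1 - k) / (((n : ℝ) + 2) ^ 2 * ((n : ℝ) + 3))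
        + (((k : ℝ) + 1) / ((n : ℝ) + 2) - c) ^ 2 := by
  have h (t : ℝ) : bern n k t * (t - c) ^ 2
      = bern n k t * t ^ 2 - 2 * c * (bern n k t * t) + c ^ 2 * bern n k t := by ring
  simp only [betaMean, h]
  rw [integral_add, integral_sub, integral_const_mul, integral_const_mul,
    integral_bern_mul_sq hk, integral_bern_mul_id hk, integral_bern hk]
  · field_simp
    ring
  all_goals exact Continuous.intervalIntegrable (by fun_prop) _ _

lemma betaMean_sub_sq_le {n k : ℕ} (hk : k ≤ n) (c : ℝ) :
    betaMean n k (fun t => (t - c) ^ 2)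
      ≤ 1 / ((n : ℝ) + 1) + (((k : ℝ) + 1) / ((n : ℝ) + 2) - c) ^ 2 := by
  rw [betaMean_sub_sq hk]
  gcongr ?_ + _
  have hkn : (k : ℝ) ≤ n := by exact_mod_cast hk
  rw [div_le_div_iff₀ (by positivity) (by positivity)]
  have : ((k : ℝ) + 1) * ((n : ℝ) + 1 - k) ≤ ((n : ℝ) + 2) ^ 2 := by nlinarith
  nlinarith

lemma IsCompact.exists_abs_sub_le_add_mul_sq {s : Set ℝ} (hs : IsCompact s) {f : ℝ → ℝ}
    (hf : ContinuousOn f s) {ε : ℝ} (hε : 0 < ε) :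
    ∃ K, 0 ≤ K ∧ ∀ t ∈ s, ∀ c ∈ s, |f t - f c| ≤ ε + K * (t - c) ^ 2 := by
  obtain ⟨δ, hδ, hδf⟩ :=
    Metric.uniformContinuousOn_iff.1 (hs.uniformContinuousOn_of_continuous hf) ε hε
  obtain ⟨F, hF⟩ := hs.exists_bound_of_continuousOn hf
  refine ⟨2 * |F| / δ ^ 2, by positivity, fun t ht c hc => ?_⟩
  rcases lt_or_ge (dist t c) δ with hnear | hfar
  · have := hδf t ht c hc hnear
    rw [Real.dist_eq] at this
    nlinarith [sq_nonneg (t - c), show 0 ≤ 2 * |F| / δ ^ 2 by positivity]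
  · rw [Real.dist_eq] at hfar
    have hsq : δ ^ 2 ≤ (t - c) ^ 2 := by nlinarith [sq_abs (t - c)]
    have hK : 2 * |F| ≤ 2 * |F| / δ ^ 2 * (t - c) ^ 2 := by
      rw [div_mul_eq_mul_div, le_div_iff₀ (by positivity)]
      exact mul_le_mul_of_nonneg_left hsq (by positivity)
    calc |f t - f c| ≤ |f t| + |f c| := abs_sub _ _
      _ ≤ 2 * |F| := by linarith [hF t ht, hF c hc, le_abs_self F, Real.norm_eq_abs (f t),
          Real.norm_eq_abs (f c)]
      _ ≤ ε + 2 * |F| / δ ^ 2 * (t - c) ^ 2 := by linarith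

lemma abs_betaMean_sub_le {f : ℝ → ℝ} (hf : ContinuousOn f (Set.Icc 0 1)) {ε K c : ℝ}
    (hfc : ∀ t ∈ Set.Icc (0 : ℝ) 1, |f t - f c| ≤ ε + K * (t - c) ^ 2) {n k : ℕ} (hk : k ≤ n) :
    |betaMean n k f - f c| ≤ ε + K * betaMean n k (fun t => (t - c) ^ 2) := by
  have hn : (0 : ℝ) < n + 1 := by positivity
  have hsub : betaMean n k f - f c
      = ((n : ℝ) + 1) * ∫ t in (0 : ℝ)..1, bern n k t * (f t - f c) := by
    simp only [betaMean, mul_sub]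
    rw [integral_sub (intervalIntegrable_bern_mul hf n k)
      (by apply Continuous.intervalIntegrable; fun_prop), integral_mul_const,
      integral_bern hk]
    field_simp
  have hbound : |∫ t in (0 : ℝ)..1, bern n k t * (f t - f c)|
      ≤ ∫ t in (0 : ℝ)..1, bern n k t * (ε + K * (t - c) ^ 2) := by
    rw [← Real.norm_eq_abs]
    refine norm_integral_le_of_norm_le zero_le_one (MeasureTheory.ae_of_all _ fun t ht => ?_) ?_
    · have ht' : t ∈ Set.Icc (0 : ℝ) 1 := Set.Ioc_subset_Icc_self ht
      rw [Real.norm_eq_abs, abs_mul, abs_of_nonneg (bern_nonneg n k ht')]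
      exact mul_le_mul_of_nonneg_left (hfc t ht') (bern_nonneg n k ht')
    · exact Continuous.intervalIntegrable (by fun_prop) _ _
  have hsplit (t : ℝ) : bern n k t * (ε + K * (t - c) ^ 2)
      = ε * bern n k t + K * (bern n k t * (t - c) ^ 2) := by ring
  calc |betaMean n k f - f c|
      = ((n : ℝ) + 1) * |∫ t in (0 : ℝ)..1, bern n k t * (f t - f c)| := by
        rw [hsub, abs_mul, abs_of_pos hn]
    _ ≤ ((n : ℝ) + 1) * ∫ t in (0 : ℝ)..1, bern n k t * (ε + K * (t - c) ^ 2) := by gcongr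
    _ = ε + K * betaMean n k (fun t => (t - c) ^ 2) := by
        simp only [hsplit, betaMean]
        rw [integral_add (Continuous.intervalIntegrable (by fun_prop) _ _)
          (Continuous.intervalIntegrable (by fun_prop) _ _), integral_const_mul,
          integral_const_mul, integral_bern hk]
        field_simp

lemma abs_sum_bern_mul_le {n : ℕ} {x : ℝ} (hx : x ∈ Set.Icc (0 : ℝ) 1) {g G : ℕ → ℝ}
    (h : ∀ k ≤ n, |g k| ≤ G k) :
    |∑ k ∈ Finset.range (n + 1), bern n k x * g k|
      ≤ ∑ k ∈ Finset.range (n + 1), bern n k x * G k := by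
  refine (Finset.abs_sum_le_sum_abs _ _).trans (Finset.sum_le_sum fun k hk => ?_)
  rw [abs_mul, abs_of_nonneg (bern_nonneg n k hx)]
  exact mul_le_mul_of_nonneg_left (h k (Nat.lt_succ_iff.1 (Finset.mem_range.1 hk)))
    (bern_nonneg n k hx)

lemma sum_bern_mul_betaMean_sub_sq_le (n : ℕ) {x : ℝ} (hx : x ∈ Set.Icc (0 : ℝ) 1) :
    ∑ k ∈ Finset.range (n + 1), bern n k x * betaMean n k (fun t => (t - x) ^ 2)
      ≤ 2 / ((n : ℝ) + 1) := by
  have hn : (0 : ℝ) < n + 1 := by positivity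
  have hexpand : ∑ k ∈ Finset.range (n + 1),
        bern n k x * (1 / ((n : ℝ) + 1) + (((k : ℝ) + 1) / ((n : ℝ) + 2) - x) ^ 2)
      = (1 / ((n : ℝ) + 1) + ((1 - 2 * x) ^ 2 - 2 * (1 - 2 * x) * n * x) / ((n : ℝ) + 2) ^ 2)
          * ∑ k ∈ Finset.range (n + 1), bern n k x
        + 2 * (1 - 2 * x) / ((n : ℝ) + 2) ^ 2 * ∑ k ∈ Finset.range (n + 1), (k : ℝ) * bern n k x
        + 1 / ((n : ℝ) + 2) ^ 2 * ∑ k ∈ Finset.range (n + 1), (n * x - k) ^ 2 * bern n k x := by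
    simp only [Finset.mul_sum, ← Finset.sum_add_distrib]
    refine Finset.sum_congr rfl fun k _ => ?_
    field_simp
    ring
  rw [sum_bern, sum_mul_bern, sum_sub_sq_mul_bern] at hexpand
  have hvar : ((1 - 2 * x) ^ 2 + n * (x * (1 - x))) / ((n : ℝ) + 2) ^ 2 ≤ 1 / ((n : ℝ) + 1) := by
    rw [div_le_div_iff₀ (by positivity) hn]
    nlinarith [hx.1, hx.2, mul_nonneg hx.1 (sub_nonneg.2 hx.2)]
  calc ∑ k ∈ Finset.range (n + 1), bern n k x * betaMean n k (fun t => (t - x) ^ 2)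
      ≤ ∑ k ∈ Finset.range (n + 1),
          bern n k x * (1 / ((n : ℝ) + 1) + (((k : ℝ) + 1) / ((n : ℝ) + 2) - x) ^ 2) :=
        Finset.sum_le_sum fun k hk => mul_le_mul_of_nonneg_left
          (betaMean_sub_sq_le (Nat.lt_succ_iff.1 (Finset.mem_range.1 hk)) x) (bern_nonneg n k hx)
    _ = 1 / ((n : ℝ) + 1) + ((1 - 2 * x) ^ 2 + n * (x * (1 - x))) / ((n : ℝ) + 2) ^ 2 := by
        rw [hexpand]
        ring
    _ ≤ 1 / ((n : ℝ) + 1) + 1 / ((n : ℝ) + 1) := by gcongr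
    _ = 2 / ((n : ℝ) + 1) := by ring

noncomputable def durrmeyer (n : ℕ) (f : ℝ → ℝ) (x : ℝ) : ℝ :=
  ∑ k ∈ Finset.range (n + 1), bern n k x * betaMean n k f

lemma sum_range_succ_bern_mul (m : ℕ) (x : ℝ) (g : ℕ → ℝ) :
    ∑ k ∈ Finset.range (m + 2), bern m k x * g k
      = ∑ k ∈ Finset.range (m + 1), bern m k x * g k := by
  rw [Finset.sum_range_succ, bern_natCast, Nat.choose_succ_self]
  simp

lemma sum_range_succ_bern_sub_one_mul (m : ℕ) (x : ℝ) (g : ℕ → ℝ) :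
    ∑ k ∈ Finset.range (m + 2), bern m ((k : ℤ) - 1) x * g k
      = ∑ k ∈ Finset.range (m + 1), bern m k x * g (k + 1) := by
  rw [Finset.sum_range_succ', bern_of_neg m (by norm_num)]
  simp

lemma DM1_succ (a0 a1 : ℕ → ℝ) {m : ℕ} (h : 2 * a0 (m + 1) + a1 (m + 1) = 1) (f : ℝ → ℝ)
    (x : ℝ) :
    DM1 a0 a1 (m + 1) f x = durrmeyer (m + 1) f x
      + ((a1 (m + 1) + 1) * x + a0 (m + 1) - 1)
        * ∑ k ∈ Finset.range (m + 1),
            bern m k x * (betaMean (m + 1) k f - betaMean (m + 1) (k + 1 : ℕ) f) := by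
  set β : ℕ → ℝ := fun k => betaMean (m + 1) k f
  have hDM1 : DM1 a0 a1 (m + 1) f x
      = (a1 (m + 1) * x + a0 (m + 1)) * ∑ k ∈ Finset.range (m + 1), bern m k x * β k
        + (a1 (m + 1) * (1 - x) + a0 (m + 1))
          * ∑ k ∈ Finset.range (m + 1), bern m k x * β (k + 1) := by
    rw [DM1, ← sum_range_succ_bern_mul m x β, ← sum_range_succ_bern_sub_one_mul m x β,
      Finset.mul_sum, Finset.mul_sum, Finset.mul_sum, ← Finset.sum_add_distrib]
    refine Finset.sum_congr rfl fun k _ => ?_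
    simp only [pM1, β, betaMean, Nat.add_sub_cancel]
    push_cast
    ring
  have hdurr : durrmeyer (m + 1) f x
      = (1 - x) * ∑ k ∈ Finset.range (m + 1), bern m k x * β k
        + x * ∑ k ∈ Finset.range (m + 1), bern m k x * β (k + 1) := by
    rw [durrmeyer, ← sum_range_succ_bern_mul m x β, ← sum_range_succ_bern_sub_one_mul m x β,
      Finset.mul_sum, Finset.mul_sum, ← Finset.sum_add_distrib]
    refine Finset.sum_congr rfl fun k _ => ?_
    rw [bern_succ]
    ring
  rw [hDM1, hdurr]
  simp only [mul_sub, Finset.sum_sub_distrib]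
  linear_combination (∑ k ∈ Finset.range (m + 1), bern m k x * β (k + 1)) * h

section Approximation

variable {f : ℝ → ℝ} {ε K : ℝ}

lemma abs_durrmeyer_sub_le (hf : ContinuousOn f (Set.Icc 0 1))
    (hfK : ∀ t ∈ Set.Icc (0 : ℝ) 1, ∀ c ∈ Set.Icc (0 : ℝ) 1, |f t - f c| ≤ ε + K * (t - c) ^ 2)
    (hK : 0 ≤ K) (n : ℕ) {x : ℝ} (hx : x ∈ Set.Icc (0 : ℝ) 1) :
    |durrmeyer n f x - f x| ≤ ε + 2 * K / ((n : ℝ) + 1) := by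
  have hsub : durrmeyer n f x - f x
      = ∑ k ∈ Finset.range (n + 1), bern n k x * (betaMean n k f - f x) := by
    simp only [durrmeyer, mul_sub, Finset.sum_sub_distrib, ← Finset.sum_mul, sum_bern, one_mul]
  calc |durrmeyer n f x - f x|
      ≤ ∑ k ∈ Finset.range (n + 1), bern n k x * (ε + K * betaMean n k (fun t => (t - x) ^ 2)) :=
        hsub ▸ abs_sum_bern_mul_le hx fun k hk => abs_betaMean_sub_le hf (hfK · · x hx) hk
    _ = ε * ∑ k ∈ Finset.range (n + 1), bern n k x
          + K * ∑ k ∈ Finset.range (n + 1), bern n k x * betaMean n k (fun t => (t - x) ^ 2) := by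
        rw [Finset.mul_sum, Finset.mul_sum, ← Finset.sum_add_distrib]
        exact Finset.sum_congr rfl fun k _ => by ring
    _ ≤ ε * 1 + K * (2 / ((n : ℝ) + 1)) := by
        rw [sum_bern]
        gcongr
        exact sum_bern_mul_betaMean_sub_sq_le n hx
    _ = ε + 2 * K / ((n : ℝ) + 1) := by ring

lemma abs_betaMean_sub_betaMean_succ_le (hf : ContinuousOn f (Set.Icc 0 1))
    (hfK : ∀ t ∈ Set.Icc (0 : ℝ) 1, ∀ c ∈ Set.Icc (0 : ℝ) 1, |f t - f c| ≤ ε + K * (t - c) ^ 2)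
    (hK : 0 ≤ K) {n k : ℕ} (hk : k < n) :
    |betaMean n k f - betaMean n (k + 1 : ℕ) f| ≤ 2 * (ε + 2 * K / ((n : ℝ) + 1)) := by
  set c : ℝ := ((k : ℝ) + 1) / ((n : ℝ) + 2)
  have hkn : (k : ℝ) + 1 ≤ n := by exact_mod_cast hk
  have hc : c ∈ Set.Icc (0 : ℝ) 1 := ⟨by positivity, by rw [div_le_one (by positivity)]; linarith⟩
  have hmoment (j : ℕ) (hj : j ≤ n)
      (hjc : (((j : ℝ) + 1) / ((n : ℝ) + 2) - c) ^ 2 ≤ 1 / ((n : ℝ) + 1)) :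
      |betaMean n j f - f c| ≤ ε + 2 * K / ((n : ℝ) + 1) := by
    calc |betaMean n j f - f c| ≤ ε + K * betaMean n j (fun t => (t - c) ^ 2) :=
          abs_betaMean_sub_le hf (hfK · · c hc) hj
      _ ≤ ε + K * (1 / ((n : ℝ) + 1) + 1 / ((n : ℝ) + 1)) := by
          gcongr
          exact (betaMean_sub_sq_le hj c).trans (add_le_add le_rfl hjc)
      _ = ε + 2 * K / ((n : ℝ) + 1) := by ring
  have h0 := hmoment k hk.le (by simp [c]; positivity)
  have h1 := hmoment (k + 1) hk (by
    have : (((k + 1 : ℕ) : ℝ) + 1) / ((n : ℝ) + 2) - c = 1 / ((n : ℝ) + 2) := by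
      simp only [c]
      push_cast
      ring
    rw [this, div_pow, one_pow]
    gcongr
    nlinarith)
  calc |betaMean n k f - betaMean n (k + 1 : ℕ) f|
      ≤ |betaMean n k f - f c| + |betaMean n (k + 1 : ℕ) f - f c| := by
        rw [abs_sub_comm (betaMean n (k + 1 : ℕ) f)]
        exact abs_sub_le _ (f c) _
    _ ≤ 2 * (ε + 2 * K / ((n : ℝ) + 1)) := by linarith

lemma abs_DM1_succ_sub_le {a0 a1 : ℕ → ℝ} {m : ℕ} (h : 2 * a0 (m + 1) + a1 (m + 1) = 1)
    (hf : ContinuousOn f (Set.Icc 0 1))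
    (hfK : ∀ t ∈ Set.Icc (0 : ℝ) 1, ∀ c ∈ Set.Icc (0 : ℝ) 1, |f t - f c| ≤ ε + K * (t - c) ^ 2)
    (hK : 0 ≤ K) {x : ℝ} (hx : x ∈ Set.Icc (0 : ℝ) 1) :
    |DM1 a0 a1 (m + 1) f x - f x|
      ≤ (1 + 2 * |(a1 (m + 1) + 1) * x + a0 (m + 1) - 1|) * (ε + 2 * K / ((m : ℝ) + 2)) := by
  have hm : ((m + 1 : ℕ) : ℝ) + 1 = (m : ℝ) + 2 := by push_cast; ring
  have hdurr := abs_durrmeyer_sub_le hf hfK hK (m + 1) hx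
  have hcorr : |∑ k ∈ Finset.range (m + 1),
      bern m k x * (betaMean (m + 1) k f - betaMean (m + 1) (k + 1 : ℕ) f)|
        ≤ 2 * (ε + 2 * K / ((m : ℝ) + 2)) := by
    refine (abs_sum_bern_mul_le hx fun k hk =>
      hm ▸ abs_betaMean_sub_betaMean_succ_le hf hfK hK (Nat.lt_succ_of_le hk)).trans_eq ?_
    rw [← Finset.sum_mul, sum_bern, one_mul]
  rw [hm] at hdurr
  rw [DM1_succ a0 a1 h, add_sub_right_comm]
  refine (abs_add_le _ _).trans ?_
  rw [abs_mul]
  linarith [mul_le_mul_of_nonneg_left hcorr (abs_nonneg ((a1 (m + 1) + 1) * x + a0 (m + 1) - 1))]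

end Approximation

lemma exists_forall_abs_affine_le {a0 a1 : ℕ → ℝ} (h0 : BddAbove (Set.range fun n => |a0 n|))
    (h1 : BddAbove (Set.range fun n => |a1 n|)) :
    ∃ B, 0 ≤ B ∧ ∀ n, ∀ x ∈ Set.Icc (0 : ℝ) 1, |(a1 n + 1) * x + a0 n - 1| ≤ B := by
  obtain ⟨B₀, hB₀⟩ := h0
  obtain ⟨B₁, hB₁⟩ := h1
  refine ⟨|B₀| + |B₁| + 2, by positivity, fun n x hx => ?_⟩
  have h0 : |a0 n| ≤ |B₀| := (hB₀ ⟨n, rfl⟩).trans (le_abs_self _)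
  have h1 : |a1 n| ≤ |B₁| := (hB₁ ⟨n, rfl⟩).trans (le_abs_self _)
  rw [abs_le] at h0 h1 ⊢
  constructor <;> nlinarith [hx.1, hx.2]

lemma tendstoUniformlyOn_of_abs_sub_le {α : Type*} {F : ℕ → α → ℝ} {f : α → ℝ} {s : Set α}
    (h : ∀ ε > 0, ∃ C, ∀ m : ℕ, ∀ x ∈ s, |F (m + 1) x - f x| ≤ ε + C / ((m : ℝ) + 2)) :
    TendstoUniformlyOn F f atTop s := by
  rw [Metric.tendstoUniformlyOn_iff]
  intro ε hε
  obtain ⟨C, hC⟩ := h (ε / 2) (half_pos hε)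
  have hlim : Tendsto (fun m : ℕ => C / ((m : ℝ) + 2)) atTop (𝓝 0) :=
    tendsto_const_nhds.div_atTop (tendsto_natCast_atTop_atTop.atTop_add tendsto_const_nhds)
  obtain ⟨N, hN⟩ := eventually_atTop.1 (hlim.eventually (gt_mem_nhds (half_pos hε)))
  filter_upwards [eventually_gt_atTop N] with n hn x hx
  obtain ⟨m, rfl⟩ : ∃ m, n = m + 1 := ⟨n - 1, by omega⟩
  rw [dist_comm, Real.dist_eq]
  linarith [hC m x hx, hN m (by omega)]

theorem DM1_uniform_convergence_nonpositive_case_general (a0 a1 : ℕ → ℝ) (l0 l1 : ℝ)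
    (hl0 : Tendsto a0 atTop (𝓝 l0)) (hl1 : Tendsto a1 atTop (𝓝 l1))
    (hA : ∀ n, 2 * a0 n + a1 n = 1)
    (f : ℝ → ℝ) (hf : ContinuousOn f (Set.Icc 0 1)) :
    TendstoUniformlyOn (fun n x => DM1 a0 a1 n f x) f atTop (Set.Icc 0 1) := by
  obtain ⟨B, hB0, hB⟩ := exists_forall_abs_affine_le hl0.abs.bddAbove_range hl1.abs.bddAbove_range
  refine tendstoUniformlyOn_of_abs_sub_le fun ε hε => ?_
  obtain ⟨K, hK, hfK⟩ :=
    isCompact_Icc.exists_abs_sub_le_add_mul_sq hf (by positivity : 0 < ε / (1 + 2 * B))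
  refine ⟨(1 + 2 * B) * (2 * K), fun m x hx => (abs_DM1_succ_sub_le (hA _) hf hfK hK hx).trans ?_⟩
  calc (1 + 2 * |(a1 (m + 1) + 1) * x + a0 (m + 1) - 1|) * (ε / (1 + 2 * B) + 2 * K / (m + 2))
      ≤ (1 + 2 * B) * (ε / (1 + 2 * B) + 2 * K / (m + 2)) := by gcongr; exact hB _ x hx
    _ = ε + (1 + 2 * B) * (2 * K) / ((m : ℝ) + 2) := by field_simp

theorem DM1_uniform_convergence_nonpositive_case (a0 a1 : ℕ → ℝ) (l0 l1 : ℝ)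
    (hl0 : Tendsto a0 atTop (𝓝 l0)) (hl1 : Tendsto a1 atTop (𝓝 l1))
    (hA : ∀ n, 2 * a0 n + a1 n = 1)
    (hY2 : ∀ n, a0 n < 0 ∨ a1 n + a0 n < 0)
    (f : ℝ → ℝ) (hf : ContinuousOn f (Set.Icc 0 1)) :
    TendstoUniformlyOn (fun n x => DM1 a0 a1 n f x) f atTop (Set.Icc 0 1) :=
  DM1_uniform_convergence_nonpositive_case_general a0 a1 l0 l1 hl0 hl1 hA f hf
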